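/- Let G = U⟨t⟩ be a group that is a product of a normal abelian subgroup U and a cyclic subgroup ⟨t⟩. Suppose there is a generating set A of U such that [a,_n t] = 1 for all a in A. Then [U,_n t] = 1 and G is nilpotent of class at most n+1. -/

import Mathlib

def grpComm {G : Type*} [Group G] (a b : G) : G := a⁻¹ * b⁻¹ * a * b

def engel {G : Type*} [Group G] (a b : G) : ℕ → G
  | 0 => a
  | n + 1 => grpComm (engel a b n) b

/-!
Since `U` is abelian and normal, `u ↦ [u,_k t]` is a homomorphism `U → G`; for `k = n` it kills
the generators `A`, hence all of `U`. Its image `[U,_k t]` is normal in `G = U⟨t⟩`, and modulo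
`[U,_{k+1} t]` every element of `[U,_k t]` commutes with `U` and with `t`, so it is central.
As `G/U` is cyclic, `⁅G, G⁆ ≤ U = [U,_0 t]`, and induction gives
`lowerCentralSeries G (k + 1) ≤ [U,_k t]`, which is trivial for `k = n`.
-/

section Engel

open scoped commutatorElement

variable {G : Type*} [Group G]

lemma grpComm_mul_left (a b c : G) : grpComm (a * b) c = b⁻¹ * grpComm a c * b * grpComm b c := by
  simp only [grpComm]; group

lemma map_grpComm {H : Type*} [Group H] (f : G →* H) (a b : G) :
    f (grpComm a b) = grpComm (f a) (f b) := by
  simp [grpComm]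

lemma grpComm_eq_one_iff_commute {a b : G} : grpComm a b = 1 ↔ Commute a b := by
  rw [show grpComm a b = (b * a)⁻¹ * (a * b) by simp only [grpComm]; group, inv_mul_eq_one]
  exact eq_comm

lemma grpComm_mem_iff_commute {N : Subgroup G} [N.Normal] {a b : G} :
    grpComm a b ∈ N ↔ Commute (a : G ⧸ N) (b : G ⧸ N) := by
  rw [← QuotientGroup.eq_one_iff, ← grpComm_eq_one_iff_commute]
  exact Iff.of_eq (congrArg (· = 1) (map_grpComm (QuotientGroup.mk' N) a b))

lemma commutatorElement_mem_iff_commute {N : Subgroup G} [N.Normal] {a b : G} :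
    ⁅a, b⁆ ∈ N ↔ Commute (a : G ⧸ N) (b : G ⧸ N) := by
  rw [← QuotientGroup.eq_one_iff, ← commutatorElement_eq_one_iff_commute]
  exact Iff.rfl

lemma engel_succ (a b : G) (k : ℕ) : engel a b (k + 1) = grpComm (engel a b k) b := rfl

lemma map_engel {H : Type*} [Group H] (f : G →* H) (a b : G) (k : ℕ) :
    f (engel a b k) = engel (f a) (f b) k := by
  induction k with
  | zero => rfl
  | succ k ih => rw [engel_succ, engel_succ, map_grpComm, ih]

lemma engel_conj_of_commute {a b c : G} (h : Commute c b) (k : ℕ) :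
    engel (c * a * c⁻¹) b k = c * engel a b k * c⁻¹ := by
  have hb : MulAut.conj c b = b := by rw [MulAut.conj_apply, h.eq, mul_inv_cancel_right]
  simpa only [MulEquiv.coe_toMonoidHom, hb, MulAut.conj_apply] using
    (map_engel (MulAut.conj c).toMonoidHom a b k).symm

lemma engel_one (b : G) (k : ℕ) : engel 1 b k = 1 := by
  induction k with
  | zero => rfl
  | succ k ih => simp [engel_succ, ih, grpComm]

variable {U : Subgroup G} [U.Normal]

lemma engel_mem {u : G} (hu : u ∈ U) (t : G) (k : ℕ) : engel u t k ∈ U := by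
  induction k with
  | zero => exact hu
  | succ k ih =>
    have h : grpComm (engel u t k) t = (engel u t k)⁻¹ * (t⁻¹ * engel u t k * t⁻¹⁻¹) := by
      simp only [grpComm]; group
    rw [engel_succ, h]
    exact mul_mem (inv_mem ih) (Subgroup.Normal.conj_mem ‹_› _ ih t⁻¹)

lemma engel_mul (hU : ∀ a ∈ U, ∀ b ∈ U, a * b = b * a) {u v : G} (hu : u ∈ U) (hv : v ∈ U)
    (t : G) (k : ℕ) : engel (u * v) t k = engel u t k * engel v t k := by
  induction k with
  | zero => rfl
  | succ k ih =>
    have hcomm : grpComm (engel u t k) t * engel v t k = engel v t k * grpComm (engel u t k) t :=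
      hU _ (engel_mem hu t (k + 1)) _ (engel_mem hv t k)
    rw [engel_succ, engel_succ, engel_succ, ih, grpComm_mul_left, mul_assoc _ _ (engel v t k),
      hcomm, inv_mul_cancel_left]

/-- The range of `engelHom hU t k` is the subgroup `[U,_k t]`. -/
def engelHom (hU : ∀ a ∈ U, ∀ b ∈ U, a * b = b * a) (t : G) (k : ℕ) : U →* G where
  toFun u := engel (u : G) t k
  map_one' := engel_one t k
  map_mul' u v := engel_mul hU u.2 v.2 t k

variable {t : G}

lemma exists_conj_eq_conj_zpow (hU : ∀ a ∈ U, ∀ b ∈ U, a * b = b * a)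
    (hprod : ∀ g : G, ∃ u ∈ U, ∃ k : ℤ, g = u * t ^ k) {x : G} (hx : x ∈ U) (g : G) :
    ∃ m : ℤ, g * x * g⁻¹ = t ^ m * x * (t ^ m)⁻¹ := by
  obtain ⟨w, hw, m, rfl⟩ := hprod g
  have hconj : t ^ m * x * (t ^ m)⁻¹ ∈ U := Subgroup.Normal.conj_mem ‹_› x hx _
  refine ⟨m, ?_⟩
  calc w * t ^ m * x * (w * t ^ m)⁻¹ = w * (t ^ m * x * (t ^ m)⁻¹) * w⁻¹ := by group
    _ = t ^ m * x * (t ^ m)⁻¹ := by rw [hU w hw _ hconj, mul_inv_cancel_right]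

lemma engelHom_range_normal (hU : ∀ a ∈ U, ∀ b ∈ U, a * b = b * a)
    (hprod : ∀ g : G, ∃ u ∈ U, ∃ k : ℤ, g = u * t ^ k) (k : ℕ) :
    (engelHom hU t k).range.Normal where
  conj_mem := by
    rintro _ ⟨u, rfl⟩ g
    obtain ⟨m, hm⟩ := exists_conj_eq_conj_zpow hU hprod (engel_mem u.2 t k) g
    refine ⟨⟨t ^ m * u * (t ^ m)⁻¹, Subgroup.Normal.conj_mem ‹_› _ u.2 _⟩, ?_⟩
    exact (engel_conj_of_commute (Commute.zpow_self t m) k).trans hm.symm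

lemma commutatorElement_engel_mem (hU : ∀ a ∈ U, ∀ b ∈ U, a * b = b * a)
    (hprod : ∀ g : G, ∃ u ∈ U, ∃ k : ℤ, g = u * t ^ k) {u : G} (hu : u ∈ U) (k : ℕ) (g : G) :
    ⁅engel u t k, g⁆ ∈ (engelHom hU t (k + 1)).range := by
  set N := (engelHom hU t (k + 1)).range
  have := engelHom_range_normal hU hprod (k + 1)
  obtain ⟨w, hw, m, rfl⟩ := hprod g
  have hcomm_w : Commute ((engel u t k : G) : G ⧸ N) w :=
    Commute.map (hU _ (engel_mem hu t k) w hw) (QuotientGroup.mk' N)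
  have hcomm_t : Commute ((engel u t k : G) : G ⧸ N) t :=
    grpComm_mem_iff_commute.mp (show grpComm (engel u t k) t ∈ N from ⟨⟨u, hu⟩, rfl⟩)
  rw [commutatorElement_mem_iff_commute, QuotientGroup.mk_mul, QuotientGroup.mk_zpow]
  exact hcomm_w.mul_right (hcomm_t.zpow_right m)

lemma commutatorElement_mem_of_forall_eq_mul_zpow
    (hprod : ∀ g : G, ∃ u ∈ U, ∃ k : ℤ, g = u * t ^ k) (g h : G) : ⁅g, h⁆ ∈ U := by
  have hcyc (g : G) : ∃ m : ℤ, (g : G ⧸ U) = (t : G ⧸ U) ^ m := by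
    obtain ⟨w, hw, m, rfl⟩ := hprod g
    exact ⟨m, by rw [QuotientGroup.mk_mul, (QuotientGroup.eq_one_iff w).mpr hw, one_mul,
      QuotientGroup.mk_zpow]⟩
  obtain ⟨m, hm⟩ := hcyc g
  obtain ⟨m', hm'⟩ := hcyc h
  rw [commutatorElement_mem_iff_commute, hm, hm']
  exact Commute.zpow_zpow_self _ m m'

lemma lowerCentralSeries_succ_le_engelHom_range (hU : ∀ a ∈ U, ∀ b ∈ U, a * b = b * a)
    (hprod : ∀ g : G, ∃ u ∈ U, ∃ k : ℤ, g = u * t ^ k) (k : ℕ) :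
    (⊤ : Subgroup G).lowerCentralSeries (k + 1) ≤ (engelHom hU t k).range := by
  induction k with
  | zero =>
    refine Subgroup.commutator_le.mpr fun g _ h _ => ?_
    exact ⟨⟨_, commutatorElement_mem_of_forall_eq_mul_zpow hprod g h⟩, rfl⟩
  | succ k ih =>
    refine (Subgroup.commutator_mono ih le_rfl).trans (Subgroup.commutator_le.mpr ?_)
    rintro _ ⟨u, rfl⟩ g _
    exact commutatorElement_engel_mem hU hprod u.2 k g

end Engel

lemma engelHom_eq_one_of_closure {G : Type*} [Group G] {A : Set G} [(Subgroup.closure A).Normal]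
    (hU : ∀ a ∈ Subgroup.closure A, ∀ b ∈ Subgroup.closure A, a * b = b * a) {t : G} {n : ℕ}
    (hA : ∀ a ∈ A, engel a t n = 1) : engelHom hU t n = 1 :=
  MonoidHom.eq_of_eqOn_dense Subgroup.closure_closure_coe_preimage fun a ha => hA a ha

/-- If `G = U⟨t⟩` with `U` a normal abelian subgroup generated by a set `A` with
`[a,_n t] = 1` for all `a ∈ A`, then `[U,_n t] = 1` and `G` is nilpotent of class
at most `n+1`. -/
theorem stmt6 {G : Type*} [Group G] (U : Subgroup G) [U.Normal]
    (habel : ∀ a ∈ U, ∀ b ∈ U, a * b = b * a) (t : G) (n : ℕ)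
    (hprod : ∀ g : G, ∃ u ∈ U, ∃ k : ℤ, g = u * t ^ k)
    (A : Set G) (hAU : Subgroup.closure A = U)
    (hA : ∀ a ∈ A, engel a t n = 1) :
    (∀ u ∈ U, engel u t n = 1) ∧ (⊤ : Subgroup G).lowerCentralSeries (n + 2) = ⊥ := by
  subst hAU
  have hengel : engelHom habel t n = 1 := engelHom_eq_one_of_closure habel hA
  refine ⟨fun u hu => congrArg (· ⟨u, hu⟩) hengel, eq_bot_iff.mpr ?_⟩
  calc (⊤ : Subgroup G).lowerCentralSeries (n + 2)
      ≤ (⊤ : Subgroup G).lowerCentralSeries (n + 1) :=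
        Subgroup.lowerCentralSeries_antitone ⊤ (Nat.le_succ _)
    _ ≤ (engelHom habel t n).range := lowerCentralSeries_succ_le_engelHom_range habel hprod n
    _ = ⊥ := by rw [hengel, MonoidHom.range_one]
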